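/- Let k be a field of characteristic 2 and r ≥ 4 even. In S = k[x_1,…,x_r,A]/(x_1+⋯+x_r), the element μ_{r−1} = ∏_{I ⊆ {1,…,r−1}, |I| even} (A − ∑_{i∈I} x_i) is invariant under W = S_r ⋉ ⟨ε_1ε_2,…,ε_1ε_r⟩, where S_r permutes the x_i and fixes A, and ε_1ε_j fixes each x_m and sends A to A − x_1 − x_j. -/
import Mathlib

open MvPolynomial Finset
open scoped symmDiff

section AuxW

variable {M : Type*} [CommMonoid M] {r : ℕ}

def goodW {r : ℕ} (t : Finset (Fin r)) : Prop := ∀ i ∈ t, (i : ℕ) < r - 1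

instance {r : ℕ} (t : Finset (Fin r)) : Decidable (goodW t) :=
  inferInstanceAs (Decidable (∀ i ∈ t, (i : ℕ) < r - 1))

def reduW {r : ℕ} (t : Finset (Fin r)) : Finset (Fin r) := if goodW t then t else tᶜ

def DsetW (r : ℕ) : Finset (Finset (Fin r)) := univ.filter fun t => Even t.card ∧ goodW t

lemma goodW_compl {t : Finset (Fin r)} (h : ¬ goodW t) : goodW tᶜ := by
  simp only [goodW, not_forall] at h
  obtain ⟨i, hi, hile⟩ := h
  intro j hj
  by_contra hlt
  have hj' : j = i := Fin.ext (by have := i.isLt; have := j.isLt; omega)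
  exact (Finset.mem_compl.mp hj) (hj' ▸ hi)

lemma not_goodW_compl (hr : 0 < r) {t : Finset (Fin r)} (h : goodW t) : ¬ goodW tᶜ := by
  intro h'
  have hlast : (⟨r - 1, by omega⟩ : Fin r) ∈ tᶜ := by
    rw [Finset.mem_compl]
    intro hm
    exact absurd (h _ hm) (by simp)
  have := h' _ hlast
  simp at this

lemma even_card_compl (hre : Even r) {t : Finset (Fin r)} (ht : Even t.card) :
    Even tᶜ.card := by
  have h1 := Finset.card_le_univ t
  rw [Finset.card_compl, Fintype.card_fin] at *
  rw [Nat.even_iff] at *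
  omega

lemma reduW_mem (hre : Even r) {t : Finset (Fin r)} (ht : Even t.card) : reduW t ∈ DsetW r := by
  rw [reduW]
  split
  · exact Finset.mem_filter.mpr ⟨Finset.mem_univ _, ht, by assumption⟩
  · exact Finset.mem_filter.mpr ⟨Finset.mem_univ _, even_card_compl hre ht,
      goodW_compl (by assumption)⟩

lemma reduW_inv (hr : 0 < r) (T T' : Finset (Fin r) → Finset (Fin r))
    (h1 : ∀ t, T' (T t) = t) (hcT' : ∀ t, T' tᶜ = (T' t)ᶜ)
    {t : Finset (Fin r)} (ht : goodW t) : reduW (T' (reduW (T t))) = t := by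
  by_cases h : goodW (T t)
  · rw [show reduW (T t) = T t from if_pos h, h1, show reduW t = t from if_pos ht]
  · rw [show reduW (T t) = (T t)ᶜ from if_neg h, hcT', h1,
      show reduW tᶜ = tᶜᶜ from if_neg (not_goodW_compl hr ht), compl_compl]

lemma v_reduW (v : Finset (Fin r) → M) (hv : ∀ t, v tᶜ = v t) (t : Finset (Fin r)) :
    v (reduW t) = v t := by
  rw [reduW]; split
  · rfl
  · exact hv t

lemma prod_DsetW (hr : 0 < r) (hre : Even r) (v : Finset (Fin r) → M) (hv : ∀ t, v tᶜ = v t)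
    (T T' : Finset (Fin r) → Finset (Fin r))
    (h1 : ∀ t, T' (T t) = t) (h2 : ∀ t, T (T' t) = t)
    (hcT : ∀ t, T tᶜ = (T t)ᶜ) (hcT' : ∀ t, T' tᶜ = (T' t)ᶜ)
    (hpT : ∀ t, Even t.card → Even (T t).card)
    (hpT' : ∀ t, Even t.card → Even (T' t).card) :
    ∏ t ∈ DsetW r, v (T t) = ∏ t ∈ DsetW r, v t := by
  refine Finset.prod_nbij' (fun t => reduW (T t)) (fun t => reduW (T' t)) ?_ ?_ ?_ ?_ ?_
  · intro t ht
    exact reduW_mem hre (hpT t (Finset.mem_filter.mp ht).2.1)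
  · intro t ht
    exact reduW_mem hre (hpT' t (Finset.mem_filter.mp ht).2.1)
  · intro t ht
    exact reduW_inv hr T T' h1 hcT' (Finset.mem_filter.mp ht).2.2
  · intro t ht
    exact reduW_inv hr T' T h2 hcT (Finset.mem_filter.mp ht).2.2
  · intro t _
    exact (v_reduW v hv (T t)).symm

lemma map_filter_castLE {t : Finset (Fin r)} (hg : goodW t) :
    (univ.filter (fun i : Fin (r - 1) => Fin.castLE (Nat.sub_le r 1) i ∈ t)).map
      (Fin.castLEEmb (Nat.sub_le r 1)) = t := by
  ext j
  simp only [Finset.mem_map, Finset.mem_filter, Finset.mem_univ, true_and]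
  constructor
  · rintro ⟨a, ha, rfl⟩; exact ha
  · intro hj
    refine ⟨⟨(j : ℕ), ?_⟩, ?_, ?_⟩
    · exact hg j hj
    · exact hj
    · rfl

lemma prod_P_D (hr : 0 < r) (v : Finset (Fin r) → M) :
    ∏ s ∈ ((Finset.univ : Finset (Fin (r - 1))).powerset.filter fun s => Even s.card),
      v (s.map (Fin.castLEEmb (Nat.sub_le r 1))) = ∏ t ∈ DsetW r, v t := by
  refine Finset.prod_nbij' (fun s => s.map (Fin.castLEEmb (Nat.sub_le r 1)))
    (fun t => univ.filter (fun i : Fin (r - 1) => Fin.castLE (Nat.sub_le r 1) i ∈ t))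
    ?_ ?_ ?_ ?_ ?_
  · intro s hs
    refine Finset.mem_filter.mpr ⟨Finset.mem_univ _, ?_, ?_⟩
    · rw [Finset.card_map]
      exact (Finset.mem_filter.mp hs).2
    · intro i hi
      simp only [Finset.mem_map, Fin.castLEEmb, Function.Embedding.coeFn_mk] at hi
      obtain ⟨a, _, rfl⟩ := hi
      exact a.isLt
  · intro t ht
    obtain ⟨-, hev, hg⟩ := Finset.mem_filter.mp ht
    refine Finset.mem_filter.mpr ⟨Finset.mem_powerset.mpr (Finset.subset_univ _), ?_⟩
    have := congrArg Finset.card (map_filter_castLE hg)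
    rw [Finset.card_map] at this
    rwa [this]
  · intro s _
    ext i
    simp only [Finset.mem_filter, Finset.mem_univ, true_and]
    exact Finset.mem_map' _
  · intro t ht
    exact map_filter_castLE (Finset.mem_filter.mp ht).2.2
  · intro s _; rfl

end AuxW

set_option synthInstance.maxHeartbeats 1000000
set_option maxHeartbeats 4000000

/-- Let `k` be a field of characteristic 2 and `r ≥ 4` even. In
`S = k[x₁,…,x_r,A]/(x₁+⋯+x_r)`, the element
`μ_{r−1} = ∏_{I ⊆ {1,…,r−1}, |I| even} (A − ∑_{i∈I} x_i)` is invariant under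
`W = S_r ⋉ ⟨ε₁ε₂,…,ε₁ε_r⟩`: it is fixed (in the quotient) by every permutation
of the `x_i`, and by each `ε₁ε_j` sending `A ↦ A − x₁ − x_j` and fixing the
`x_m`. `Sum.inl m` indexes `x_{m+1}`, `Sum.inr ()` indexes `A`. -/
theorem mu_r_sub_one_invariant_r_even
    (k : Type*) [Field k] [CharP k 2] (r : ℕ) (hr : 4 ≤ r) (heven : Even r)
    (I : Ideal (MvPolynomial (Fin r ⊕ Unit) k))
    (hI : I = Ideal.span ({∑ i : Fin r, X (Sum.inl i)} : Set (MvPolynomial (Fin r ⊕ Unit) k)))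
    (μ : MvPolynomial (Fin r ⊕ Unit) k)
    (hμ : μ = ∏ s ∈ ((Finset.univ : Finset (Fin (r - 1))).powerset.filter fun s => Even s.card),
        (X (Sum.inr ()) - ∑ i ∈ s, X (Sum.inl (Fin.castLE (Nat.sub_le r 1) i)))) :
    (∀ σ : Equiv.Perm (Fin r),
        Ideal.Quotient.mk I (rename (Sum.map σ id) μ) = Ideal.Quotient.mk I μ) ∧
      ∀ j : Fin r, j ≠ (⟨0, by omega⟩ : Fin r) →
        Ideal.Quotient.mk I
            (MvPolynomial.aeval (R := k)
              (fun v : Fin r ⊕ Unit =>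
                match v with
                | Sum.inl m => X (Sum.inl m)
                | Sum.inr _ =>
                    X (Sum.inr ()) - X (Sum.inl (⟨0, by omega⟩ : Fin r)) - X (Sum.inl j))
              μ) =
          Ideal.Quotient.mk I μ := by
  classical
  set π := Ideal.Quotient.mk I with hπ
  set xb : Fin r → MvPolynomial (Fin r ⊕ Unit) k ⧸ I := fun i => π (X (Sum.inl i)) with hxb
  set Ab : MvPolynomial (Fin r ⊕ Unit) k ⧸ I := π (X (Sum.inr ())) with hAb
  have hchar : ∀ x : MvPolynomial (Fin r ⊕ Unit) k ⧸ I, -x = x := by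
    intro x
    obtain ⟨a, rfl⟩ := Ideal.Quotient.mk_surjective x
    rw [← map_neg, CharTwo.neg_eq]
  have hsub : ∀ a b : MvPolynomial (Fin r ⊕ Unit) k ⧸ I, a - b = a + b := fun a b => by
    rw [sub_eq_add_neg, hchar]
  have hzero : ∑ i : Fin r, xb i = 0 := by
    rw [hxb, ← map_sum, hπ, Ideal.Quotient.eq_zero_iff_mem, hI]
    exact Ideal.subset_span rfl
  set v : Finset (Fin r) → MvPolynomial (Fin r ⊕ Unit) k ⧸ I :=
    fun t => Ab + ∑ i ∈ t, xb i with hv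
  have hvc : ∀ t, v tᶜ = v t := by
    intro t
    have h := Finset.sum_add_sum_compl t xb
    rw [hzero] at h
    show Ab + ∑ i ∈ tᶜ, xb i = Ab + ∑ i ∈ t, xb i
    rw [eq_neg_of_add_eq_zero_right h, hchar]
  have hμD : π μ = ∏ t ∈ DsetW r, v t := by
    rw [hμ, map_prod]
    rw [Finset.prod_congr rfl (g := fun s => v (s.map (Fin.castLEEmb (Nat.sub_le r 1))))
      (fun s _ => by
        rw [map_sub, map_sum]
        show Ab - ∑ i ∈ s, xb (Fin.castLE (Nat.sub_le r 1) i) = _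
        rw [hsub]
        show _ = Ab + ∑ i ∈ s.map (Fin.castLEEmb (Nat.sub_le r 1)), xb i
        rw [Finset.sum_map]
        rfl)]
    exact prod_P_D (by omega) v
  constructor
  · intro σ
    rw [hμD]
    have hren : π (rename (Sum.map σ id) μ) = ∏ t ∈ DsetW r, v (t.image σ) := by
      rw [hμ, map_prod, map_prod]
      rw [Finset.prod_congr rfl
        (g := fun s => v ((s.map (Fin.castLEEmb (Nat.sub_le r 1))).image σ))
        (fun s _ => by
          rw [map_sub, map_sum, map_sub, map_sum]
          simp only [rename_X, Sum.map_inl, Sum.map_inr, id]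
          show Ab - ∑ i ∈ s, xb (σ (Fin.castLE (Nat.sub_le r 1) i)) = _
          rw [hsub]
          show _ = Ab + ∑ i ∈ (s.map (Fin.castLEEmb (Nat.sub_le r 1))).image σ, xb i
          rw [Finset.sum_image (fun a _ b _ h => σ.injective h), Finset.sum_map]
          rfl)]
      exact prod_P_D (by omega) (fun t => v (t.image σ))
    rw [hren]
    refine prod_DsetW (by omega) heven v hvc (fun t => t.image σ) (fun t => t.image σ.symm)
      ?_ ?_ ?_ ?_ ?_ ?_
    · intro t; simp [Finset.image_image]
    · intro t; simp [Finset.image_image]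
    · intro t
      ext j
      simp only [Finset.mem_image, Finset.mem_compl]
      constructor
      · rintro ⟨i, hi, rfl⟩ ⟨i', hi', h⟩
        exact hi (σ.injective h ▸ hi')
      · intro h
        exact ⟨σ.symm j, fun hm => h ⟨σ.symm j, hm, by simp⟩, by simp⟩
    · intro t
      ext j
      simp only [Finset.mem_image, Finset.mem_compl]
      constructor
      · rintro ⟨i, hi, rfl⟩ ⟨i', hi', h⟩
        exact hi (σ.symm.injective h ▸ hi')
      · intro h
        exact ⟨σ j, fun hm => h ⟨σ j, hm, by simp⟩, by simp⟩
    · intro t ht; rwa [Finset.card_image_of_injective t σ.injective]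
    · intro t ht; rwa [Finset.card_image_of_injective t σ.symm.injective]
  · intro j hj
    set i0 : Fin r := ⟨0, by omega⟩ with hi0
    set a : Finset (Fin r) := {i0, j} with ha
    have hane : i0 ≠ j := Ne.symm hj
    have hacard : a.card = 2 := Finset.card_pair hane
    have hasum : ∑ i ∈ a, xb i = xb i0 + xb j := Finset.sum_pair hane
    have hsd : ∀ t : Finset (Fin r), ∑ i ∈ t ∆ a, xb i = ∑ i ∈ t, xb i + ∑ i ∈ a, xb i := by
      intro t
      have h1 : ∑ i ∈ t ∆ a, xb i + ∑ i ∈ t ∩ a, xb i = ∑ i ∈ t ∪ a, xb i := by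
        rw [← Finset.sum_union (show Disjoint (t ∆ a) (t ∩ a) from disjoint_symmDiff_inf t a)]
        congr 1
        exact symmDiff_sup_inf t a
      have h2 := Finset.sum_union_inter (s₁ := t) (s₂ := a) (f := xb)
      rw [eq_sub_of_add_eq h1, hsub, ← h2]
    have hpar : ∀ t : Finset (Fin r), Even t.card → Even (t ∆ a).card := by
      intro t ht
      have e1 : (t ∆ a).card = (t \ a).card + (a \ t).card := by
        rw [symmDiff_def]
        exact Finset.card_union_of_disjoint disjoint_sdiff_sdiff
      have e2 : (t \ a).card + (t ∩ a).card = t.card := Finset.card_sdiff_add_card_inter t a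
      have e3 : (a \ t).card + (a ∩ t).card = a.card := Finset.card_sdiff_add_card_inter a t
      have e4 : (t ∩ a).card = (a ∩ t).card := by rw [Finset.inter_comm]
      rw [Nat.even_iff] at ht ⊢
      omega
    have hcomm : ∀ t : Finset (Fin r), tᶜ ∆ a = (t ∆ a)ᶜ := by
      intro t
      ext j'
      simp only [Finset.mem_symmDiff, Finset.mem_compl]
      tauto
    have haev : π (MvPolynomial.aeval (R := k)
        (fun w : Fin r ⊕ Unit =>
          match w with
          | Sum.inl m => X (Sum.inl m)
          | Sum.inr _ => X (Sum.inr ()) - X (Sum.inl i0) - X (Sum.inl j)) μ)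
        = ∏ t ∈ DsetW r, v (t ∆ a) := by
      rw [hμ, map_prod, map_prod]
      rw [Finset.prod_congr rfl
        (g := fun s => v ((s.map (Fin.castLEEmb (Nat.sub_le r 1))) ∆ a))
        (fun s _ => by
          rw [map_sub, map_sum, map_sub, map_sum]
          simp only [aeval_X]
          rw [map_sub, map_sub]
          show Ab - xb i0 - xb j - ∑ i ∈ s, xb (Fin.castLE (Nat.sub_le r 1) i) = _
          rw [hsub, hsub, hsub]
          show _ = Ab + ∑ i ∈ (s.map (Fin.castLEEmb (Nat.sub_le r 1))) ∆ a, xb i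
          rw [hsd, hasum, Finset.sum_map]
          show _ = Ab + (∑ i ∈ s, xb (Fin.castLE (Nat.sub_le r 1) i) + (xb i0 + xb j))
          ring)]
      exact prod_P_D (by omega) (fun t => v (t ∆ a))
    rw [haev, hμD]
    exact prod_DsetW (by omega) heven v hvc (fun t => t ∆ a) (fun t => t ∆ a)
      (fun t => symmDiff_symmDiff_cancel_right a t) (fun t => symmDiff_symmDiff_cancel_right a t)
      hcomm hcomm hpar hpar
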